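/- Let H be an n×n Hermitian complex matrix, let v_1, …, v_N be n×n complex matrices, set V := Σ_j v_jᴴ v_j, K(ξ) := Σ_j v_j ξ v_jᴴ, and let L(ξ) := −i(Hξ − ξH) − (1/2)(Vξ + ξV) + K(ξ) be the GKLS generator. Define the three vector fields X(ξ) := −i(Hξ − ξH) (Hamiltonian part), Y(ξ) := −V⊙ξ + Tr(Vξ)·ξ (gradient-like part), and Z(ξ) := K(ξ) − Tr(Vξ)·ξ (Kraus part). Then: (1) L(ξ) = X(ξ) + Y(ξ) + Z(ξ) for every ξ, i.e. the quadratic terms of Y and Z cancel and their sum is the linear map ξ ↦ −V⊙ξ + K(ξ); (2) for every Hermitian ξ with Tr(ξ) = 1, each of X(ξ), Y(ξ), Z(ξ) is Hermitian with zero trace, so each of the three vector fields is separately tangent to the affine hyperplane of trace-one Hermitian matrices. -/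

import Mathlib

/-!
The terms `Tr(Vξ)·ξ` enter `Y` and `Z` with opposite signs, so they cancel in `Y + Z`.
For tangency, each part is Hermitian because `H`, `V`, `ξ` are and `Tr(Vξ)` is real. The traces
vanish because a commutator is trace-free, `Tr(V⊙ξ) = Tr(Vξ)`, and by cyclicity
`Tr(Σ vⱼ ξ vⱼᴴ) = Tr(Σ vⱼᴴ vⱼ ξ) = Tr(Vξ)`, while `Tr ξ = 1` makes the trace of `Tr(Vξ)·ξ`
exactly `Tr(Vξ)`.
-/

open Matrix

/-- The Jordan product of two complex matrices: `x ⊙ y = (xy + yx)/2`. -/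
noncomputable def jordanProd {n : ℕ} (x y : Matrix (Fin n) (Fin n) ℂ) :
    Matrix (Fin n) (Fin n) ℂ :=
  (1 / 2 : ℂ) • (x * y + y * x)

section StarRing

variable {R : Type*} [NonUnitalRing R] [StarRing R] {a b : R}

theorem IsSelfAdjoint.mul_sub_mul_mem_skewAdjoint (ha : IsSelfAdjoint a) (hb : IsSelfAdjoint b) :
    a * b - b * a ∈ skewAdjoint R := by
  rw [skewAdjoint.mem_iff, star_sub, star_mul, star_mul, ha.star_eq, hb.star_eq, neg_sub]

theorem IsSelfAdjoint.mul_add_mul (ha : IsSelfAdjoint a) (hb : IsSelfAdjoint b) :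
    IsSelfAdjoint (a * b + b * a) := by
  rw [IsSelfAdjoint, star_add, star_mul, star_mul, ha.star_eq, hb.star_eq, add_comm]

end StarRing

theorem IsSelfAdjoint.I_smul_mul_sub_mul {A : Type*} [Ring A] [StarRing A] [Module ℂ A]
    [StarModule ℂ A] {a b : A} (ha : IsSelfAdjoint a) (hb : IsSelfAdjoint b) :
    IsSelfAdjoint (Complex.I • (a * b - b * a)) :=
  isSelfAdjoint_smul_of_mem_skewAdjoint RCLike.I_mem_skewAdjoint
    (ha.mul_sub_mul_mem_skewAdjoint hb)

namespace Matrix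

variable {ι m n R : Type*} [Fintype ι]

theorem trace_mul_sub_mul_comm [Fintype n] [CommRing R] (A B : Matrix n n R) :
    trace (A * B - B * A) = 0 := by
  rw [trace_sub, trace_mul_comm, sub_self]

theorem IsHermitian.isSelfAdjoint_trace_mul [Fintype n] [CommSemiring R] [StarRing R]
    {A B : Matrix n n R} (hA : A.IsHermitian) (hB : B.IsHermitian) :
    IsSelfAdjoint (trace (A * B)) := by
  rw [IsSelfAdjoint, ← trace_conjTranspose, conjTranspose_mul, hA.eq, hB.eq, trace_mul_comm]

theorem trace_sum_mul_mul_conjTranspose [Fintype m] [Fintype n] [CommSemiring R] [StarRing R]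
    (v : ι → Matrix m n R) (A : Matrix n n R) :
    trace (∑ j, v j * A * (v j)ᴴ) = trace ((∑ j, (v j)ᴴ * v j) * A) := by
  rw [trace_sum, Finset.sum_mul, trace_sum]
  exact Finset.sum_congr rfl fun j _ ↦ trace_mul_cycle (v j) A (v j)ᴴ

theorem isHermitian_sum_conjTranspose_mul_self [Fintype m] [NonUnitalSemiring R] [StarRing R]
    (v : ι → Matrix m n R) : (∑ j, (v j)ᴴ * v j).IsHermitian :=
  isSelfAdjoint_sum _ fun j _ ↦ isHermitian_conjTranspose_mul_self (v j)

theorem IsHermitian.sum_mul_mul_conjTranspose [Fintype n] [NonUnitalSemiring R] [StarRing R]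
    {A : Matrix n n R} (hA : A.IsHermitian) (v : ι → Matrix m n R) :
    (∑ j, v j * A * (v j)ᴴ).IsHermitian :=
  isSelfAdjoint_sum _ fun j _ ↦ isHermitian_mul_mul_conjTranspose (v j) hA

end Matrix

section JordanProduct

variable {n : ℕ} {x y : Matrix (Fin n) (Fin n) ℂ}

theorem Matrix.IsHermitian.jordanProd (hx : x.IsHermitian) (hy : y.IsHermitian) :
    (_root_.jordanProd x y).IsHermitian :=
  IsHermitian.smul (hx.isSelfAdjoint.mul_add_mul hy.isSelfAdjoint) (by simp [IsSelfAdjoint])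

theorem trace_jordanProd : trace (jordanProd x y) = trace (x * y) := by
  rw [jordanProd, trace_smul, trace_add, trace_mul_comm y x, smul_eq_mul]
  ring

end JordanProduct

theorem gkls_vector_field_decomposition {n N : ℕ}
    (H : Matrix (Fin n) (Fin n) ℂ) (hH : H.IsHermitian)
    (v : Fin N → Matrix (Fin n) (Fin n) ℂ)
    (V : Matrix (Fin n) (Fin n) ℂ) (hV : V = ∑ j, (v j)ᴴ * v j)
    (K : Matrix (Fin n) (Fin n) ℂ → Matrix (Fin n) (Fin n) ℂ)
    (hK : ∀ ξ, K ξ = ∑ j, v j * ξ * (v j)ᴴ)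
    (L X Y Z : Matrix (Fin n) (Fin n) ℂ → Matrix (Fin n) (Fin n) ℂ)
    (hL : ∀ ξ, L ξ = -Complex.I • (H * ξ - ξ * H) - (1 / 2 : ℂ) • (V * ξ + ξ * V) + K ξ)
    (hX : ∀ ξ, X ξ = -Complex.I • (H * ξ - ξ * H))
    (hY : ∀ ξ, Y ξ = -jordanProd V ξ + (Matrix.trace (V * ξ)) • ξ)
    (hZ : ∀ ξ, Z ξ = K ξ - (Matrix.trace (V * ξ)) • ξ) :
    (∀ ξ : Matrix (Fin n) (Fin n) ℂ, L ξ = X ξ + Y ξ + Z ξ) ∧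
    (∀ ξ : Matrix (Fin n) (Fin n) ℂ, Y ξ + Z ξ = -jordanProd V ξ + K ξ) ∧
    (∀ ξ : Matrix (Fin n) (Fin n) ℂ, ξ.IsHermitian → ξ.trace = 1 →
      ((X ξ).IsHermitian ∧ Matrix.trace (X ξ) = 0) ∧
      ((Y ξ).IsHermitian ∧ Matrix.trace (Y ξ) = 0) ∧
      ((Z ξ).IsHermitian ∧ Matrix.trace (Z ξ) = 0)) := by
  have hVH : V.IsHermitian := hV ▸ isHermitian_sum_conjTranspose_mul_self v
  have hYZ : ∀ ξ, Y ξ + Z ξ = -jordanProd V ξ + K ξ := fun ξ ↦ by rw [hY, hZ]; abel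
  refine ⟨fun ξ ↦ ?_, hYZ, fun ξ hξ htr ↦ ⟨⟨?_, ?_⟩, ⟨?_, ?_⟩, ⟨?_, ?_⟩⟩⟩
  · rw [hL, hX, add_assoc, hYZ, jordanProd]
    abel
  · rw [hX, neg_smul]
    exact (hH.isSelfAdjoint.I_smul_mul_sub_mul hξ.isSelfAdjoint).neg
  · rw [hX, trace_smul, trace_mul_sub_mul_comm, smul_zero]
  · rw [hY]
    exact (hVH.jordanProd hξ).neg.add (hξ.smul (hVH.isSelfAdjoint_trace_mul hξ))
  · rw [hY, trace_add, trace_neg, trace_jordanProd, trace_smul, htr, smul_eq_mul, mul_one,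
      neg_add_cancel]
  · rw [hZ, hK]
    exact (hξ.sum_mul_mul_conjTranspose v).sub (hξ.smul (hVH.isSelfAdjoint_trace_mul hξ))
  · rw [hZ, trace_sub, trace_smul, htr, hK, trace_sum_mul_mul_conjTranspose, ← hV, smul_eq_mul,
      mul_one, sub_self]
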